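/- Let d > 0, let K ≥ 1, let ω_1, …, ω_K ≥ 0 with Σ_k ω_k = 1, and let u_1, …, u_K > 0. Then d (Σ_k ω_k u_k²)² + 4 Σ_k ω_k u_k^{−d} ≥ d + 4, with equality if and only if u_k = 1 for all k with ω_k > 0. -/
import Mathlib


open Real

lemma pt_le (d t : ℝ) (hd : 0 < d) (ht : 0 < t) :
    d + 2 ≤ d * t ^ 2 + 2 * t ^ (-d) := by
  have h1 : Real.log (t ^ 2) ≤ t ^ 2 - 1 := Real.log_le_sub_one_of_pos (by positivity)
  have h2 : Real.log (t ^ (-d)) ≤ t ^ (-d) - 1 :=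
    Real.log_le_sub_one_of_pos (Real.rpow_pos_of_pos ht _)
  rw [Real.log_pow] at h1
  rw [Real.log_rpow ht] at h2
  push_cast at h1
  nlinarith [h1, h2, hd.le]

lemma pt_lt (d t : ℝ) (hd : 0 < d) (ht : 0 < t) (hne : t ≠ 1) :
    d + 2 < d * t ^ 2 + 2 * t ^ (-d) := by
  have hlt : Real.log t ≠ 0 := Real.log_ne_zero_of_pos_of_ne_one ht hne
  have hne2 : t ^ (-d) ≠ 1 := by
    intro h
    have : Real.log (t ^ (-d)) = 0 := by rw [h, Real.log_one]
    rw [Real.log_rpow ht] at this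
    rcases mul_eq_zero.mp this with h | h
    · exact hd.ne' (neg_eq_zero.mp h)
    · exact hlt h
  have h1 : Real.log (t ^ 2) ≤ t ^ 2 - 1 := Real.log_le_sub_one_of_pos (by positivity)
  have h2 : Real.log (t ^ (-d)) < t ^ (-d) - 1 :=
    Real.log_lt_sub_one_of_pos (Real.rpow_pos_of_pos ht _) hne2
  rw [Real.log_pow] at h1
  rw [Real.log_rpow ht] at h2
  push_cast at h1
  nlinarith [h1, h2, hd.le]

/-- The online estimator's asymptotic IMSE is at least the batch optimum:
`d (∑ ωₖ uₖ²)² + 4 ∑ ωₖ uₖ^{−d} ≥ d + 4`, with equality iff `uₖ = 1` whenever `ωₖ > 0`. -/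
theorem online_imse_lower_bound (d : ℝ) (hd : 0 < d) (K : ℕ) (hK : 1 ≤ K)
    (ω u : Fin K → ℝ) (hω : ∀ k, 0 ≤ ω k) (hωsum : ∑ k, ω k = 1)
    (hu : ∀ k, 0 < u k) :
    d + 4 ≤ d * (∑ k, ω k * (u k) ^ 2) ^ 2 + 4 * ∑ k, ω k * (u k) ^ (-d) ∧
    (d * (∑ k, ω k * (u k) ^ 2) ^ 2 + 4 * ∑ k, ω k * (u k) ^ (-d) = d + 4 ↔
      ∀ k, 0 < ω k → u k = 1) := by
  set S2 := ∑ k, ω k * (u k) ^ 2 with hS2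
  set S := ∑ k, ω k * (u k) ^ (-d) with hS
  -- pointwise terms are nonnegative
  have hterm : ∀ k : Fin K, 0 ≤ ω k * (d * (u k) ^ 2 + 2 * (u k) ^ (-d) - (d + 2)) := by
    intro k
    apply mul_nonneg (hω k)
    have := pt_le d (u k) hd (hu k)
    linarith
  have expand : ∑ k, ω k * (d * (u k) ^ 2 + 2 * (u k) ^ (-d) - (d + 2))
      = d * S2 + 2 * S - (d + 2) := by
    have hc : ∀ k : Fin K, ω k * (d * (u k) ^ 2 + 2 * (u k) ^ (-d) - (d + 2))
        = d * (ω k * (u k) ^ 2) + 2 * (ω k * (u k) ^ (-d)) - (d + 2) * ω k := fun k => by ring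
    simp_rw [hc]
    rw [Finset.sum_sub_distrib, Finset.sum_add_distrib, ← Finset.mul_sum, ← Finset.mul_sum,
      ← Finset.mul_sum, hωsum, ← hS2, ← hS]
    ring
  have key : d + 2 ≤ d * S2 + 2 * S := by
    have h0 : 0 ≤ ∑ k, ω k * (d * (u k) ^ 2 + 2 * (u k) ^ (-d) - (d + 2)) :=
      Finset.sum_nonneg fun k _ => hterm k
    linarith [expand ▸ h0]
  constructor
  · nlinarith [key, sq_nonneg (S2 - 1), hd.le]
  constructor
  · intro heq
    have hkey2 : d * S2 + 2 * S = d + 2 := by nlinarith [key, sq_nonneg (S2 - 1), hd.le]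
    have hsum0 : ∑ k, ω k * (d * (u k) ^ 2 + 2 * (u k) ^ (-d) - (d + 2)) = 0 := by
      rw [expand]; linarith
    have hall := (Finset.sum_eq_zero_iff_of_nonneg (fun k _ => hterm k)).mp hsum0
    intro k hk
    have h := hall k (Finset.mem_univ k)
    have h2 : d * (u k) ^ 2 + 2 * (u k) ^ (-d) - (d + 2) = 0 := by
      rcases mul_eq_zero.mp h with h | h
      · exact absurd h hk.ne'
      · exact h
    by_contra hne
    have := pt_lt d (u k) hd (hu k) hne
    linarith
  · intro hall
    have e2 : S2 = 1 := by
      rw [hS2, ← hωsum]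
      apply Finset.sum_congr rfl
      intro k _
      rcases (hω k).eq_or_lt with h | h
      · rw [← h]; ring
      · rw [hall k h]; ring
    have e3 : S = 1 := by
      rw [hS, ← hωsum]
      apply Finset.sum_congr rfl
      intro k _
      rcases (hω k).eq_or_lt with h | h
      · rw [← h]; ring
      · rw [hall k h, Real.one_rpow, mul_one]
    rw [e2, e3]; ring
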